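/- arXiv:2212.00371 — 3 statements merged into one kernel-verified Lean document; each statement's English description precedes it below -/
import Mathlib

section
/- If a binary cubic form σ has negative discriminant, then σ factors as σ = ℓ · q, where ℓ is a nonzero real linear form and q is a positive definite (or negative definite) real binary quadratic form. -/
/-!
A real binary cubic form always has a real linear factor `αw₁ + βw₂`: if `a₁ = 0` take `w₂`,
otherwise take `w₁ - tw₂` for a real root `t` of the odd-degree polynomial `σ(t, 1)`.
For `σ = (αw₁ + βw₂) q` the discriminant is `4/27 · disc q · q(β, -α)²`, so `Δ < 0` forces
`disc q < 0`.
-/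

open Polynomial

theorem Real.exists_isRoot_of_odd_natDegree {f : ℝ[X]} (hf : Odd f.natDegree) :
    ∃ x, f.IsRoot x := by
  induction hn : f.natDegree using Nat.strong_induction_on generalizing f with
  | _ n ih =>
    have hf0 : f ≠ 0 := by rintro rfl; simp at hf
    have hfu : ¬IsUnit f := fun hu => by simp [natDegree_eq_zero_of_isUnit hu] at hf
    -- peel off an irreducible factor: it has degree 1, or degree 2 and the cofactor has odd degree
    obtain ⟨g, hg, h, rfl⟩ := WfDvdMonoid.exists_irreducible_factor hfu hf0
    have hh0 : h ≠ 0 := right_ne_zero_of_mul hf0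
    rw [natDegree_mul hg.ne_zero hh0] at hf hn
    have := hg.natDegree_pos
    rcases (by have := hg.natDegree_le_two; omega : g.natDegree = 1 ∨ g.natDegree = 2)
      with hg1 | hg2
    · obtain ⟨x, hx⟩ :=
        exists_root_of_degree_eq_one ((degree_eq_iff_natDegree_eq_of_pos one_pos).mpr hg1)
      exact ⟨x, by simp [hx.eq_zero]⟩
    · have hh : Odd h.natDegree := by
        rw [hg2, add_comm] at hf
        exact (Nat.odd_add.mp hf).mpr even_two
      obtain ⟨x, hx⟩ := ih h.natDegree (by omega) hh rfl
      exact ⟨x, by simp [hx.eq_zero]⟩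

theorem Real.exists_cubic_eq_zero {a : ℝ} (ha : a ≠ 0) (b c d : ℝ) :
    ∃ t : ℝ, a * t ^ 3 + b * t ^ 2 + c * t + d = 0 := by
  have hdeg : (C a * X ^ 3 + C b * X ^ 2 + C c * X + C d).natDegree = 3 := by
    compute_degree!
  obtain ⟨t, ht⟩ := Real.exists_isRoot_of_odd_natDegree (by rw [hdeg]; decide)
  exact ⟨t, by simpa using ht⟩

/-- The discriminant of `a₁w₁³ + 3a₂w₁²w₂ + 3a₃w₁w₂² + a₄w₂³`. -/
def cubicFormDisc (a₁ a₂ a₃ a₄ : ℝ) : ℝ :=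
  6*a₁*a₂*a₃*a₄ - 4*(a₁*a₃^3 + a₄*a₂^3) + 3*a₂^2*a₃^2 - a₁^2*a₄^2

/-- The coefficients of `(αw₁ + βw₂)(pw₁² + 2rw₁w₂ + sw₂²)`. -/
theorem cubicFormDisc_linear_mul_quadratic (α β p r s : ℝ) :
    cubicFormDisc (α*p) ((2*α*r + β*p)/3) ((α*s + 2*β*r)/3) (β*s)
      = 4/27 * (r^2 - p*s) * (s*α^2 - 2*r*α*β + p*β^2)^2 := by
  unfold cubicFormDisc
  ring

theorem exists_cubicForm_coeffs_eq_linear_mul_quadratic (a₁ a₂ a₃ a₄ : ℝ) :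
    ∃ α β p r s : ℝ, (α, β) ≠ (0, 0) ∧ a₁ = α*p ∧ a₂ = (2*α*r + β*p)/3 ∧
      a₃ = (α*s + 2*β*r)/3 ∧ a₄ = β*s := by
  by_cases ha₁ : a₁ = 0
  · exact ⟨0, 1, 3*a₂, 3*a₃/2, a₄, by simp, by simp [ha₁], by ring, by ring, by ring⟩
  · obtain ⟨t, ht⟩ := Real.exists_cubic_eq_zero ha₁ (3*a₂) (3*a₃) a₄
    exact ⟨1, -t, a₁, (3*a₂ + a₁*t)/2, 3*a₃ + 3*a₂*t + a₁*t^2, by simp, by ring, by ring,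
      by ring, by linear_combination ht⟩

/-- A binary cubic form with negative discriminant factors as a nonzero real linear form
times a definite real binary quadratic form (one with negative discriminant r² − ps). -/
theorem cubic_form_neg_disc_factors_linear_times_definite_quadratic
    (a₁ a₂ a₃ a₄ : ℝ)
    (hΔ : 6*a₁*a₂*a₃*a₄ - 4*(a₁*a₃^3 + a₄*a₂^3) + 3*a₂^2*a₃^2 - a₁^2*a₄^2 < 0) :
    ∃ α β p r s : ℝ, (α, β) ≠ (0, 0) ∧ r^2 - p*s < 0 ∧
      ∀ w₁ w₂ : ℝ,
        a₁*w₁^3 + 3*a₂*w₁^2*w₂ + 3*a₃*w₁*w₂^2 + a₄*w₂^3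
          = (α*w₁ + β*w₂) * (p*w₁^2 + 2*r*w₁*w₂ + s*w₂^2) := by
  obtain ⟨α, β, p, r, s, hαβ, rfl, rfl, rfl, rfl⟩ :=
    exists_cubicForm_coeffs_eq_linear_mul_quadratic a₁ a₂ a₃ a₄
  have hdisc : 4/27 * (r^2 - p*s) * (s*α^2 - 2*r*α*β + p*β^2)^2 < 0 := by
    rw [← cubicFormDisc_linear_mul_quadratic]
    exact hΔ
  refine ⟨α, β, p, r, s, hαβ, ?_, fun w₁ w₂ => by ring⟩
  exact neg_of_mul_neg_right (neg_of_mul_neg_left hdisc (sq_nonneg _)) (by norm_num)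
end

section
/- Covariance of the 1D invariants under diffeomorphisms: let φ: ℝ → ℝ be a diffeomorphism and A = a₃∂³ + a₂∂² + a₁∂ + a₀ with a₃ nowhere vanishing; let A' = φ_* A (the operator with (A'h)∘φ = A(h∘φ)) with coefficients a₃', a₂', a₁', a₀'. Then the functions I₀ = a₀ and I₃ = a₃(a₀')³ (where a₀' denotes da₀/dx) transform naturally: I₀(A') ∘ φ = I₀(A) and I₃(A') ∘ φ = I₃(A). -/
lemma iterated2 (f : ℝ → ℝ) : iteratedDeriv 2 f = deriv (deriv f) := by
  rw [show (2:ℕ) = 1+1 from rfl, iteratedDeriv_succ, iteratedDeriv_one]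

lemma iterated3 (f : ℝ → ℝ) : iteratedDeriv 3 f = deriv (deriv (deriv f)) := by
  rw [show (3:ℕ) = 2+1 from rfl, iteratedDeriv_succ, iterated2]

/-- Covariance of the 1D invariants I₀ = a₀ and I₃ = a₃·(a₀′)³ under diffeomorphisms of ℝ:
if A′ = φ_*A (i.e. (A′h)∘φ = A(h∘φ) for all smooth h), then I₀(A′)∘φ = I₀(A) and
I₃(A′)∘φ = I₃(A). -/
theorem one_dim_invariants_covariant
    (φ : ℝ → ℝ) (hφ : Function.Bijective φ) (hφs : ContDiff ℝ (⊤ : ℕ∞) φ)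
    (hφ' : ∀ x, deriv φ x ≠ 0)
    (a₃ a₂ a₁ a₀ b₃ b₂ b₁ b₀ : ℝ → ℝ)
    (ha₃ : ContDiff ℝ (⊤ : ℕ∞) a₃) (ha₂ : ContDiff ℝ (⊤ : ℕ∞) a₂)
    (ha₁ : ContDiff ℝ (⊤ : ℕ∞) a₁) (ha₀ : ContDiff ℝ (⊤ : ℕ∞) a₀)
    (hb₃ : ContDiff ℝ (⊤ : ℕ∞) b₃) (hb₂ : ContDiff ℝ (⊤ : ℕ∞) b₂)
    (hb₁ : ContDiff ℝ (⊤ : ℕ∞) b₁) (hb₀ : ContDiff ℝ (⊤ : ℕ∞) b₀)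
    (ha₃ne : ∀ x, a₃ x ≠ 0)
    (hpush : ∀ h : ℝ → ℝ, ContDiff ℝ (⊤ : ℕ∞) h → ∀ x : ℝ,
      b₃ (φ x) * iteratedDeriv 3 h (φ x) + b₂ (φ x) * iteratedDeriv 2 h (φ x)
          + b₁ (φ x) * deriv h (φ x) + b₀ (φ x) * h (φ x)
        = a₃ x * iteratedDeriv 3 (h ∘ φ) x + a₂ x * iteratedDeriv 2 (h ∘ φ) x
          + a₁ x * deriv (h ∘ φ) x + a₀ x * h (φ x)) :
    (∀ x : ℝ, b₀ (φ x) = a₀ x) ∧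
    (∀ x : ℝ, b₃ (φ x) * (deriv b₀ (φ x))^3 = a₃ x * (deriv a₀ x)^3) := by
  have dφ : Differentiable ℝ φ := hφs.differentiable (by simp)
  have hφi : ContDiff ℝ (⊤ : ℕ∞) φ := hφs.of_le (by simp)
  have dφ2 : Differentiable ℝ (deriv φ) :=
    (contDiff_infty_iff_deriv.mp hφi).2.differentiable (by simp)
  have dφ3 : Differentiable ℝ (deriv (deriv φ)) :=
    (contDiff_infty_iff_deriv.mp (contDiff_infty_iff_deriv.mp hφi).2).2.differentiable (by simp)
  -- Part 1 : plug in the constant function 1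
  have h1 : ∀ x, b₀ (φ x) = a₀ x := by
    intro x
    have hp := hpush (fun _ => 1) contDiff_const x
    simp only [iterated2, iterated3, Function.comp_def, deriv_const', mul_zero, mul_one,
      zero_add, add_zero] at hp
    linarith
  -- Part 2 : plug in cubics to identify b₃
  have h3 : ∀ x, b₃ (φ x) = a₃ x * (deriv φ x)^3 := by
    intro x₀
    set c := φ x₀ with hc
    set h : ℝ → ℝ := fun y => (y - c)^3 with hh
    have hhc : ContDiff ℝ (⊤ : ℕ∞) h := (contDiff_id.sub contDiff_const).pow 3
    have dh : ∀ y, HasDerivAt h (3*(y - c)^2) y := by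
      intro y
      have := ((hasDerivAt_id y).sub_const c).fun_pow 3
      simpa using this
    have e1 : deriv h = fun y => 3*(y - c)^2 := funext fun y => (dh y).deriv
    have e2 : deriv (deriv h) = fun y => 6*(y - c) := by
      rw [e1]; funext y
      have hd : HasDerivAt (fun y : ℝ => 3*(y - c)^2) (6*(y-c)) y := by
        have := (((hasDerivAt_id y).sub_const c).fun_pow 2).const_mul (3:ℝ)
        exact this.congr_deriv (by simp only [id_eq]; ring)
      exact hd.deriv
    have e3 : deriv (deriv (deriv h)) = fun _ => 6 := by
      rw [e2]; funext y
      have hd : HasDerivAt (fun y : ℝ => 6*(y - c)) 6 y := by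
        simpa using ((hasDerivAt_id y).sub_const c).const_mul (6:ℝ)
      exact hd.deriv
    have dg : ∀ x, HasDerivAt (h ∘ φ) (3*(φ x - c)^2 * deriv φ x) x := fun x =>
      (dh (φ x)).comp x (dφ x).hasDerivAt
    have eg1 : deriv (h ∘ φ) = fun x => 3*(φ x - c)^2 * deriv φ x :=
      funext fun x => (dg x).deriv
    have dg2 : ∀ x, HasDerivAt (fun x => 3*(φ x - c)^2 * deriv φ x)
        (6*(φ x - c) * (deriv φ x)^2 + 3*(φ x - c)^2 * deriv (deriv φ) x) x := by
      intro x
      have hA : HasDerivAt (fun x => 3*(φ x - c)^2) (6*(φ x - c) * deriv φ x) x := by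
        have := (((dφ x).hasDerivAt.sub_const c).fun_pow 2).const_mul (3:ℝ)
        exact this.congr_deriv (by ring)
      have := hA.fun_mul (dφ2 x).hasDerivAt
      exact this.congr_deriv (by ring)
    have eg2 : deriv (deriv (h ∘ φ))
        = fun x => 6*(φ x - c) * (deriv φ x)^2 + 3*(φ x - c)^2 * deriv (deriv φ) x := by
      rw [eg1]; exact funext fun x => (dg2 x).deriv
    have key3 : deriv (deriv (deriv (h ∘ φ))) x₀ = 6 * (deriv φ x₀)^3 := by
      rw [eg2]
      have hA : HasDerivAt (fun x => 6*(φ x - c)) (6 * deriv φ x₀) x₀ := by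
        simpa using ((dφ x₀).hasDerivAt.sub_const c).const_mul (6:ℝ)
      have hB : HasDerivAt (fun x => (deriv φ x)^2)
          (2 * deriv φ x₀ * deriv (deriv φ) x₀) x₀ := by
        have := ((dφ2 x₀).hasDerivAt).fun_pow 2
        simpa [mul_comm] using this
      have hC : HasDerivAt (fun x => 3*(φ x - c)^2) (6*(φ x₀ - c) * deriv φ x₀) x₀ := by
        have := (((dφ x₀).hasDerivAt.sub_const c).fun_pow 2).const_mul (3:ℝ)
        exact this.congr_deriv (by ring)
      have hD : HasDerivAt (deriv (deriv φ)) (deriv (deriv (deriv φ)) x₀) x₀ :=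
        (dφ3 x₀).hasDerivAt
      have := ((hA.fun_mul hB).fun_add (hC.fun_mul hD)).deriv
      rw [this]
      have : φ x₀ - c = 0 := by rw [hc]; ring
      rw [this]; ring
    have hp := hpush h hhc x₀
    rw [iterated2, iterated3, iterated2, iterated3] at hp
    rw [e3, e2, e1, key3, eg2, eg1] at hp
    simp only [← hc, hh, sub_self] at hp
    norm_num at hp
    linarith
  -- chain rule for b₀
  have hchain : ∀ x, deriv b₀ (φ x) * deriv φ x = deriv a₀ x := by
    intro x
    have hcomp : b₀ ∘ φ = a₀ := funext fun x => h1 x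
    have hd := ((hb₀.differentiable (by simp) (φ x)).hasDerivAt).comp x (dφ x).hasDerivAt
    rw [hcomp] at hd
    exact (hd.deriv).symm ▸ rfl
  refine ⟨h1, fun x => ?_⟩
  rw [h3 x, ← hchain x]
  ring
end

section
/- Invariance of Gröbner basis coefficients: let a group G act on the polynomial ring K[X₀,...,X_N] by acting on coefficients through field automorphisms of K, and suppose an ideal J ⊆ K[X₀,...,X_N] is G-stable. Then every element of the reduced Gröbner basis of J with respect to the lexicographic monomial order is fixed by G; in particular all coefficients of the reduced Gröbner basis polynomials are G-invariant elements of K. -/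
open MvPolynomial

variable {K : Type*} [Field K] {N : ℕ}

/-- `m` is the leading monomial of `f` with respect to the lexicographic monomial order:
it occurs in `f` and dominates every monomial of `f`. -/
def IsLeadMonomial (f : MvPolynomial (Fin (N + 1)) K) (m : Fin (N + 1) →₀ ℕ) : Prop :=
  m ∈ f.support ∧ ∀ m' ∈ f.support, toLex m' ≤ toLex m

/-- `B` is the reduced Gröbner basis of the ideal `J` with respect to the lexicographic
monomial order: its elements are nonzero members of `J` generating `J`; the leading
monomial of every nonzero element of `J` is divisible by the leading monomial of some
element of `B`; every element of `B` is monic; and no monomial occurring in an element of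
`B` is divisible by the leading monomial of another element of `B`. -/
def IsReducedGroebnerBasis (J : Ideal (MvPolynomial (Fin (N + 1)) K))
    (B : Finset (MvPolynomial (Fin (N + 1)) K)) : Prop :=
  (∀ b ∈ B, b ≠ 0 ∧ b ∈ J) ∧
  Ideal.span (B : Set (MvPolynomial (Fin (N + 1)) K)) = J ∧
  (∀ f ∈ J, f ≠ 0 → ∃ b ∈ B, ∃ m mb, IsLeadMonomial f m ∧ IsLeadMonomial b mb ∧
    ∀ i, mb i ≤ m i) ∧
  (∀ b ∈ B, ∀ m, IsLeadMonomial b m → coeff m b = 1) ∧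
  (∀ b ∈ B, ∀ b' ∈ B, b ≠ b' → ∀ m ∈ b.support, ∀ mb',
    IsLeadMonomial b' mb' → ¬ ∀ i, mb' i ≤ m i)

/-- Invariance of reduced Gröbner bases: if a group G acts on K[X₀,…,X_N] through field
automorphisms of the coefficient field K (fixing the variables) and the ideal J is
G-stable, then every element of the reduced Gröbner basis of J with respect to the
lexicographic order is fixed by G; in particular all of its coefficients are
G-invariant elements of K. -/
theorem reduced_groebner_basis_invariant
    {G : Type*} [Group G] (σ : G →* (K ≃+* K))
    (J : Ideal (MvPolynomial (Fin (N + 1)) K))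
    (hJ : ∀ g : G, ∀ f ∈ J, MvPolynomial.map ((σ g : K ≃+* K) : K →+* K) f ∈ J)
    (B : Finset (MvPolynomial (Fin (N + 1)) K))
    (hB : IsReducedGroebnerBasis J B) :
    ∀ g : G, ∀ b ∈ B, MvPolynomial.map ((σ g : K ≃+* K) : K →+* K) b = b := by
  intro g b hb
  set φ : K →+* K := ((σ g : K ≃+* K) : K →+* K) with hφ
  have hinj : Function.Injective φ := (σ g).injective
  obtain ⟨hb0, hbJ⟩ := hB.1 b hb
  -- support of mapped polynomial is the same
  have hsupp : (MvPolynomial.map φ b).support = b.support :=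
    MvPolynomial.support_map_of_injective b hinj
  -- lead monomial of b
  have hne : b.support.Nonempty := by
    rwa [Finset.nonempty_iff_ne_empty, ne_eq, MvPolynomial.support_eq_empty]
  obtain ⟨mb, hmb, hmax⟩ := b.support.exists_max_image toLex hne
  have hlead : IsLeadMonomial b mb := ⟨hmb, hmax⟩
  have hmonic : coeff mb b = 1 := hB.2.2.2.1 b hb mb hlead
  -- the difference
  set f : MvPolynomial (Fin (N + 1)) K := MvPolynomial.map φ b - b with hf
  have hfsupp : f.support ⊆ b.support := by
    intro m hm
    rw [MvPolynomial.mem_support_iff] at hm ⊢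
    intro h0
    apply hm
    simp [hf, MvPolynomial.coeff_map, h0]
  have hcoeffmb : coeff mb f = 0 := by
    simp [hf, MvPolynomial.coeff_map, hmonic]
  have hfJ : f ∈ J := J.sub_mem (hJ g b hbJ) hbJ
  have hf0 : f = 0 := by
    by_contra hf0
    obtain ⟨b', hb', m, mb', hmlead, hmb'lead, hdvd⟩ := hB.2.2.1 f hfJ hf0
    have hmsupp : m ∈ b.support := hfsupp hmlead.1
    by_cases hbb : b = b'
    · subst hbb
      -- mb' is the lead monomial of b, so mb' = mb
      have h1 : toLex mb' ≤ toLex mb := hmax mb' hmb'lead.1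
      have h2 : toLex mb ≤ toLex mb' := hmb'lead.2 mb hmb
      have hmbeq : mb' = mb := toLex.injective (le_antisymm h1 h2)
      subst hmbeq
      -- mb' ≤ m componentwise, and toLex m ≤ toLex mb', hence m = mb'
      have h3 : toLex mb' ≤ toLex m := Finsupp.toLex_monotone (fun i => hdvd i)
      have h4 : toLex m ≤ toLex mb' := hmax m hmsupp
      have : m = mb' := toLex.injective (le_antisymm h4 h3)
      subst this
      exact (MvPolynomial.mem_support_iff.mp hmlead.1) hcoeffmb
    · exact hB.2.2.2.2 b hb b' hb' hbb m hmsupp mb' hmb'lead hdvd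
  have := sub_eq_zero.mp hf0
  exact this
end
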